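/- Let n and p be integers with 2 ≤ p ≤ n-2 and let D be a nonzero real skew-symmetric 2×2 matrix. Define: H, the (n-p)×p matrix whose top-left 2×2 block is I₂ and whose other entries are 0; H̆, the (n-p)×p matrix whose top-left 2×2 block is D and whose other entries are 0. Define the n×n matrices Ω = [[0, -Hᵀ],[H, 0]] and Ω̆ = [[0, -H̆ᵀ],[H̆, 0]]. Then the derivative at ε = 0 of the map ε ↦ exp(πΩ + εΩ̆)·I_{n×p} is the zero n×p matrix. (This says that the points γ(0) = I_{n×p} and γ(π) are conjugate along the geodesic γ(t) = exp(tΩ)·I_{n×p} of the Stiefel manifold, for every member of the β-family of metrics.) -/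

import Mathlib

open Matrix Real

/-- Rodrigues-type formula for the matrix exponential. -/
lemma rodrigues {m : Type*} [Fintype m] [DecidableEq m] (A : Matrix m m ℝ) (r : ℝ)
    (hr : 0 < r) (hA : A ^ 3 = (-(r ^ 2)) • A) :
    NormedSpace.exp A
      = 1 + (Real.sin r / r) • A + ((1 - Real.cos r) / r ^ 2) • A ^ 2 := by
  letI : SeminormedRing (Matrix m m ℝ) := Matrix.linftyOpSemiNormedRing
  letI : NormedRing (Matrix m m ℝ) := Matrix.linftyOpNormedRing
  letI : NormedAlgebra ℝ (Matrix m m ℝ) := Matrix.linftyOpNormedAlgebra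
  letI : NormedAlgebra ℚ (Matrix m m ℝ) := Matrix.linftyOpNormedAlgebra
  have hrne : r ≠ 0 := ne_of_gt hr
  set N : ℝ → Matrix m m ℝ := fun t =>
    1 + (Real.sin (r * t) / r) • A + ((1 - Real.cos (r * t)) / r ^ 2) • A ^ 2 with hN
  have hrt : ∀ t : ℝ, HasDerivAt (fun u : ℝ => r * u) r t := fun t => by
    simpa using (hasDerivAt_id t).const_mul r
  have hNder : ∀ t, HasDerivAt N
      (Real.cos (r * t) • A + (Real.sin (r * t) / r) • A ^ 2) t := by
    intro t
    have h1 : HasDerivAt (fun u : ℝ => Real.sin (r * u) / r) (Real.cos (r * t)) t := by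
      have := ((Real.hasDerivAt_sin (r * t)).comp t (hrt t)).div_const r
      refine this.congr_deriv ?_
      field_simp
    have h2 : HasDerivAt (fun u : ℝ => (1 - Real.cos (r * u)) / r ^ 2)
        (Real.sin (r * t) / r) t := by
      have := (((Real.hasDerivAt_cos (r * t)).comp t (hrt t)).const_sub 1).div_const (r ^ 2)
      refine this.congr_deriv ?_
      field_simp
    have := ((hasDerivAt_const t (1 : Matrix m m ℝ)).add (h1.smul_const A)).add
      (h2.smul_const (A ^ 2))
    rw [zero_add] at this
    exact this
  have hANt : ∀ t, A * N t = Real.cos (r * t) • A + (Real.sin (r * t) / r) • A ^ 2 := by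
    intro t
    simp only [hN]
    rw [mul_add, mul_add, mul_one, mul_smul_comm, mul_smul_comm, ← pow_two A,
      ← pow_succ' A 2, hA]
    match_scalars <;> (field_simp; try ring)
  set g : ℝ → Matrix m m ℝ := fun t => NormedSpace.exp (t • (-A)) * N t with hg
  have hgder : ∀ t, HasDerivAt g 0 t := by
    intro t
    have h1 := hasDerivAt_exp_smul_const (𝕂 := ℝ) (-A) t
    have h2 := h1.mul (hNder t)
    refine h2.congr_deriv ?_
    rw [mul_assoc, Matrix.neg_mul, hANt t, mul_neg, neg_add_cancel]
  have hconst : g 1 = g 0 :=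
    is_const_of_deriv_eq_zero (fun t => (hgder t).differentiableAt)
      (fun t => (hgder t).deriv) 1 0
  have hg0 : g 0 = 1 := by
    simp [hg, hN, NormedSpace.exp_zero]
  have hg1 : NormedSpace.exp (-A) * N 1 = 1 := by
    have := hconst.trans hg0
    simpa [hg] using this
  have hinv : NormedSpace.exp A * NormedSpace.exp (-A) = 1 := by
    have h := NormedSpace.exp_add_of_commute ((Commute.refl A).neg_right)
    rw [add_neg_cancel, NormedSpace.exp_zero] at h
    exact h.symm
  have hexp : NormedSpace.exp A = N 1 := by
    calc NormedSpace.exp A = NormedSpace.exp A * (NormedSpace.exp (-A) * N 1) := by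
          rw [hg1, mul_one]
    _ = (NormedSpace.exp A * NormedSpace.exp (-A)) * N 1 := (mul_assoc _ _ _).symm
    _ = N 1 := by rw [hinv, one_mul]
  rw [hexp]
  simp [hN]


attribute [local instance] Matrix.normedAddCommGroup Matrix.normedSpace

/-- The q×r real matrix whose top-left 2×2 block is `D` and whose other entries are zero. -/
noncomputable def padTL (q r : ℕ) (D : Matrix (Fin 2) (Fin 2) ℝ) : Matrix (Fin q) (Fin r) ℝ :=
  Matrix.of fun i j => if h : (i : ℕ) < 2 ∧ (j : ℕ) < 2 then D ⟨i, h.1⟩ ⟨j, h.2⟩ else 0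

lemma padTL_transpose (q r : ℕ) (M : Matrix (Fin 2) (Fin 2) ℝ) :
    (padTL q r M)ᵀ = padTL r q Mᵀ := by
  ext i j
  by_cases hi : (i : ℕ) ≤ 1 <;> by_cases hj : (j : ℕ) ≤ 1 <;>
    simp [padTL, Matrix.transpose_apply, hi, hj]

lemma padTL_smul (q r : ℕ) (a : ℝ) (M : Matrix (Fin 2) (Fin 2) ℝ) :
    padTL q r (a • M) = a • padTL q r M := by
  ext i j
  by_cases h : (i : ℕ) < 2 ∧ (j : ℕ) < 2 <;> simp [padTL, h]

lemma padTL_neg (q r : ℕ) (M : Matrix (Fin 2) (Fin 2) ℝ) :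
    padTL q r (-M) = -padTL q r M := by
  ext i j
  by_cases h : (i : ℕ) ≤ 1 ∧ (j : ℕ) ≤ 1 <;> simp [padTL, h]

lemma padTL_mul (a b q : ℕ) (hq : 2 ≤ q) (A B : Matrix (Fin 2) (Fin 2) ℝ) :
    padTL a q A * padTL q b B = padTL a b (A * B) := by
  have h0 : (0 : ℕ) < q := by omega
  have h1 : (1 : ℕ) < q := by omega
  ext i j
  rw [Matrix.mul_apply]
  have hsum : ∑ k : Fin q, padTL a q A i k * padTL q b B k j
      = ∑ k ∈ Finset.univ.filter (fun k : Fin q => (k : ℕ) < 2),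
          padTL a q A i k * padTL q b B k j := by
    refine (Finset.sum_filter_of_ne ?_).symm
    intro k _ hk
    by_contra hk2
    exact hk (by simp [padTL, show ¬ (k : ℕ) ≤ 1 by omega])
  have hfilter : (Finset.univ.filter (fun k : Fin q => (k : ℕ) < 2))
      = {(⟨0, h0⟩ : Fin q), ⟨1, h1⟩} := by
    ext k
    simp [Fin.ext_iff]
    omega
  rw [hsum, hfilter, Finset.sum_insert (by simp [Fin.ext_iff]), Finset.sum_singleton]
  by_cases hij : (i : ℕ) < 2 ∧ (j : ℕ) < 2
  · simp only [padTL, Matrix.of_apply, hij, hij.1, hij.2, and_true, true_and, dif_pos,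
      Nat.zero_lt_two, Nat.one_lt_two, and_self]
    rw [Matrix.mul_apply, Fin.sum_univ_two]
    rfl
  · rcases not_and_or.mp hij with hi | hj
    · simp [padTL, show ¬ (i : ℕ) ≤ 1 by omega]
    · simp [padTL, show ¬ (j : ℕ) ≤ 1 by omega]

/-- γ(0) = I_{n×p} and γ(π) are conjugate along the Stiefel geodesic
γ(t) = exp(tΩ)·I_{n×p}: the derivative at ε = 0 of `ε ↦ exp(πΩ + εΩ̆)·I_{n×p}`
is the zero n×p matrix. -/
theorem stmt11 (n p : ℕ) (hp : 2 ≤ p) (hpn : p ≤ n - 2)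
    (D : Matrix (Fin 2) (Fin 2) ℝ) (hD : D ≠ 0) (hDskew : Dᵀ = -D)
    (H : Matrix (Fin (n - p)) (Fin p) ℝ) (hH : H = padTL (n - p) p 1)
    (H' : Matrix (Fin (n - p)) (Fin p) ℝ) (hH' : H' = padTL (n - p) p D)
    (Ω : Matrix (Fin p ⊕ Fin (n - p)) (Fin p ⊕ Fin (n - p)) ℝ)
    (hΩ : Ω = Matrix.fromBlocks 0 (-Hᵀ) H 0)
    (Ω' : Matrix (Fin p ⊕ Fin (n - p)) (Fin p ⊕ Fin (n - p)) ℝ)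
    (hΩ' : Ω' = Matrix.fromBlocks 0 (-H'ᵀ) H' 0) :
    deriv (fun ε : ℝ =>
        NormedSpace.exp (π • Ω + ε • Ω') *
          Matrix.fromRows (1 : Matrix (Fin p) (Fin p) ℝ) (0 : Matrix (Fin (n - p)) (Fin p) ℝ)) 0
      = 0 := by
  have hq2 : 2 ≤ n - p := by omega
  set E := Matrix.fromRows (1 : Matrix (Fin p) (Fin p) ℝ)
    (0 : Matrix (Fin (n - p)) (Fin p) ℝ) with hE
  set c : ℝ := D 1 0 with hc
  have hsk : ∀ i j, D i j = -D j i := by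
    intro i j
    have := congrFun (congrFun hDskew j) i
    simpa [Matrix.transpose_apply] using this
  have h00 : D 0 0 = 0 := by have := hsk 0 0; linarith
  have h11 : D 1 1 = 0 := by have := hsk 1 1; linarith
  have h01 : D 0 1 = -c := by simpa [hc] using hsk 0 1
  have hD2 : D * D = (-(c ^ 2)) • (1 : Matrix (Fin 2) (Fin 2) ℝ) := by
    ext i j
    fin_cases i <;> fin_cases j <;>
      simp [Matrix.mul_apply, Fin.sum_univ_two, Matrix.one_apply, h00, h11, h01] <;> ring
  have hDtD : Dᵀ * D = (c ^ 2) • (1 : Matrix (Fin 2) (Fin 2) ℝ) := by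
    rw [hDskew, Matrix.neg_mul, hD2]; simp
  have hDDt : D * Dᵀ = (c ^ 2) • (1 : Matrix (Fin 2) (Fin 2) ℝ) := by
    rw [hDskew, Matrix.mul_neg, hD2]; simp
  have hHt : Hᵀ = padTL p (n - p) 1 := by
    rw [hH, padTL_transpose, Matrix.transpose_one]
  have hH't : H'ᵀ = padTL p (n - p) Dᵀ := by
    rw [hH', padTL_transpose]
  set K1 := padTL p p (1 : Matrix (Fin 2) (Fin 2) ℝ) with hK1
  set K2 := padTL (n - p) (n - p) (1 : Matrix (Fin 2) (Fin 2) ℝ) with hK2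
  have mHtH : Hᵀ * H = K1 := by rw [hHt, hH, padTL_mul _ _ _ hq2, one_mul]
  have mHHt : H * Hᵀ = K2 := by rw [hHt, hH, padTL_mul _ _ _ hp, one_mul]
  have mHtH' : Hᵀ * H' = padTL p p D := by rw [hHt, hH', padTL_mul _ _ _ hq2, one_mul]
  have mH'tH : H'ᵀ * H = padTL p p Dᵀ := by rw [hH't, hH, padTL_mul _ _ _ hq2, mul_one]
  have mHH't : H * H'ᵀ = padTL (n - p) (n - p) Dᵀ := by
    rw [hH't, hH, padTL_mul _ _ _ hp, one_mul]
  have mH'Ht : H' * Hᵀ = padTL (n - p) (n - p) D := by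
    rw [hHt, hH', padTL_mul _ _ _ hp, mul_one]
  have mH'tH' : H'ᵀ * H' = (c ^ 2) • K1 := by
    rw [hH't, hH', padTL_mul _ _ _ hq2, hDtD, padTL_smul, ← hK1]
  have mH'H't : H' * H'ᵀ = (c ^ 2) • K2 := by
    rw [hH't, hH', padTL_mul _ _ _ hp, hDDt, padTL_smul, ← hK2]
  have mK1Ht : K1 * Hᵀ = Hᵀ := by rw [hK1, hHt, padTL_mul _ _ _ hp, one_mul]
  have mK1H't : K1 * H'ᵀ = H'ᵀ := by rw [hK1, hH't, padTL_mul _ _ _ hp, one_mul]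
  have mK2H : K2 * H = H := by rw [hK2, hH, padTL_mul _ _ _ hq2, one_mul]
  have mK2H' : K2 * H' = H' := by rw [hK2, hH', padTL_mul _ _ _ hq2, one_mul]
  set P : Matrix (Fin p ⊕ Fin (n - p)) (Fin p ⊕ Fin (n - p)) ℝ :=
    Matrix.fromBlocks K1 0 0 K2 with hP
  have hΩΩ : Ω * Ω = -P := by
    rw [hΩ, Matrix.fromBlocks_multiply, hP]
    simp [Matrix.neg_mul, Matrix.mul_neg, mHtH, mHHt, Matrix.fromBlocks_neg]
  have hΩ'Ω' : Ω' * Ω' = (-(c ^ 2)) • P := by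
    rw [hΩ', Matrix.fromBlocks_multiply, hP]
    simp [Matrix.neg_mul, Matrix.mul_neg, mH'tH', mH'H't, Matrix.fromBlocks_smul,
      Matrix.fromBlocks_neg, neg_smul]
  have hanti : Ω * Ω' + Ω' * Ω = 0 := by
    have hpD : padTL p p Dᵀ = -padTL p p D := by rw [hDskew, padTL_neg]
    have hqD : padTL (n - p) (n - p) Dᵀ = -padTL (n - p) (n - p) D := by
      rw [hDskew, padTL_neg]
    rw [hΩ, hΩ', Matrix.fromBlocks_multiply, Matrix.fromBlocks_multiply]
    simp [Matrix.neg_mul, Matrix.mul_neg, mHtH', mH'tH, mHH't, mH'Ht, hpD, hqD,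
      Matrix.fromBlocks_add]
  have hPΩ : P * Ω = Ω := by
    rw [hP, hΩ, Matrix.fromBlocks_multiply]
    simp [Matrix.mul_neg, mK1Ht, mK2H]
  have hPΩ' : P * Ω' = Ω' := by
    rw [hP, hΩ', Matrix.fromBlocks_multiply]
    simp [Matrix.mul_neg, mK1H't, mK2H']
  set r : ℝ → ℝ := fun ε => Real.sqrt (π ^ 2 + ε ^ 2 * c ^ 2) with hrdef
  have hrpos : ∀ ε, 0 < r ε := fun ε => Real.sqrt_pos.mpr (by positivity)
  have hrsq : ∀ ε, r ε ^ 2 = π ^ 2 + ε ^ 2 * c ^ 2 := fun ε => Real.sq_sqrt (by positivity)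
  have hM2 : ∀ ε : ℝ, (π • Ω + ε • Ω') * (π • Ω + ε • Ω') = (-(r ε ^ 2)) • P := by
    intro ε
    have hcross : (π * ε) • (Ω * Ω') + (ε * π) • (Ω' * Ω) = 0 := by
      rw [mul_comm ε π, ← smul_add, hanti, smul_zero]
    calc (π • Ω + ε • Ω') * (π • Ω + ε • Ω')
        = (π * π) • (Ω * Ω) + ((π * ε) • (Ω * Ω') + (ε * π) • (Ω' * Ω))
            + (ε * ε) • (Ω' * Ω') := by
          simp only [add_mul, mul_add, smul_mul_assoc, mul_smul_comm, smul_smul, smul_add]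
          module
    _ = (π * π) • (-P) + 0 + (ε * ε) • ((-(c ^ 2)) • P) := by rw [hΩΩ, hcross, hΩ'Ω']
    _ = (-(r ε ^ 2)) • P := by
          rw [hrsq ε]
          match_scalars
          ring
  have hM3 : ∀ ε : ℝ, (π • Ω + ε • Ω') ^ 3 = (-(r ε ^ 2)) • (π • Ω + ε • Ω') := by
    intro ε
    rw [pow_succ, pow_two (π • Ω + ε • Ω'), hM2 ε, smul_mul_assoc, mul_add, mul_smul_comm, mul_smul_comm,
      hPΩ, hPΩ']
  have hfun : (fun ε : ℝ => NormedSpace.exp (π • Ω + ε • Ω') * E)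
      = (fun ε : ℝ => E + (π * (Real.sin (r ε) / r ε)) • (Ω * E)
          + (ε * Real.sin (r ε) / r ε) • (Ω' * E) + (Real.cos (r ε) - 1) • (P * E)) := by
    funext ε
    have hne : r ε ≠ 0 := (hrpos ε).ne'
    rw [rodrigues (π • Ω + ε • Ω') (r ε) (hrpos ε) (hM3 ε)]
    rw [Matrix.add_mul, Matrix.add_mul, Matrix.one_mul, Matrix.smul_mul, Matrix.smul_mul,
      pow_two (π • Ω + ε • Ω'), hM2 ε]
    rw [Matrix.add_mul, Matrix.smul_mul, Matrix.smul_mul, Matrix.smul_mul]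
    match_scalars <;> field_simp <;> ring
  have hr0 : r 0 = π := by
    rw [hrdef]
    simp
    exact Real.sqrt_sq pi_pos.le
  have hu : HasDerivAt (fun ε : ℝ => π ^ 2 + ε ^ 2 * c ^ 2) 0 0 := by
    have h := ((hasDerivAt_pow 2 (0 : ℝ)).mul_const (c ^ 2)).const_add (π ^ 2)
    simpa using h
  have hrd : HasDerivAt r 0 0 := by
    have h := (Real.hasDerivAt_sqrt (x := π ^ 2 + (0 : ℝ) ^ 2 * c ^ 2) (by positivity)).comp 0 hu
    simp [hrdef, Function.comp] at h
    exact h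
  have hsin : HasDerivAt (fun ε : ℝ => Real.sin (r ε)) 0 0 := by
    have h := (Real.hasDerivAt_sin (r 0)).comp 0 hrd
    simp [Function.comp] at h
    exact h
  have hA1 : HasDerivAt (fun ε : ℝ => π * (Real.sin (r ε) / r ε)) 0 0 := by
    have hdiv := hsin.div hrd (by rw [hr0]; exact Real.pi_ne_zero)
    have h := hdiv.const_mul π
    simpa using h
  have hA2 : HasDerivAt (fun ε : ℝ => ε * Real.sin (r ε) / r ε) 0 0 := by
    have hnum : HasDerivAt (fun ε : ℝ => ε * Real.sin (r ε)) 0 0 := by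
      have h := (hasDerivAt_id (0 : ℝ)).mul hsin
      simp [hr0, Real.sin_pi] at h
      exact h
    have h := hnum.div hrd (by rw [hr0]; exact Real.pi_ne_zero)
    simp at h
    exact h
  have hA3 : HasDerivAt (fun ε : ℝ => Real.cos (r ε) - 1) 0 0 := by
    have h := ((Real.hasDerivAt_cos (r 0)).comp 0 hrd).sub_const 1
    simpa [Function.comp] using h
  have hF : HasDerivAt (fun ε : ℝ => E + (π * (Real.sin (r ε) / r ε)) • (Ω * E)
      + (ε * Real.sin (r ε) / r ε) • (Ω' * E) + (Real.cos (r ε) - 1) • (P * E)) 0 0 := by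
    have h := (((hasDerivAt_const (0 : ℝ) E).add (hA1.smul_const (Ω * E))).add
      (hA2.smul_const (Ω' * E))).add (hA3.smul_const (P * E))
    simp at h
    exact h
  rw [hfun]
  exact hF.deriv
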